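/- arXiv:1211.2223 — 2 statements merged into one kernel-verified Lean document; each statement's English description precedes it below -/
import Mathlib

section
/- Let p > 1, set L(s) = s⁴ − (32p/(p+1))s² + (32p(p+3)/(p+1)²)s − 64p/(p+1)² and t₀ = √(2p/(p+1)) + √(2p/(p+1) − √(2p/(p+1))). Then L has exactly one root in the open interval (2t₀, ∞): there exists a unique s₀ > 2t₀ with L(s₀) = 0. -/
/-!
With `q = 2p/(p+1) ∈ (1, 2)`, `u = √q` and `w = √(u² - u)` we have `t₀ = u + w` and
`L(s) = s⁴ - 16u²s² + 16u²(3 - u²)s - 16u²(2 - u²)`. Expanding `L'` around `s = 2t₀` and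
eliminating `w²` gives a cubic in `s - 2t₀` with positive coefficients, so `L` is strictly
increasing on `[2t₀, ∞)`. The same elimination gives
`L(2t₀) = -16u²(u² - 1)(2u - 1 + 2w) < 0`, while `L(6) > 0`; the intermediate value theorem
and monotonicity give the unique root.
-/

/-- The quartic polynomial `L`. -/
noncomputable def Lpoly (p s : ℝ) : ℝ :=
  s ^ 4 - 32 * p / (p + 1) * s ^ 2 + 32 * p * (p + 3) / (p + 1) ^ 2 * s
    - 64 * p / (p + 1) ^ 2

/-- `t₀ = √(2p/(p+1)) + √(2p/(p+1) − √(2p/(p+1)))`. -/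
noncomputable def t0 (p : ℝ) : ℝ :=
  Real.sqrt (2 * p / (p + 1)) +
    Real.sqrt (2 * p / (p + 1) - Real.sqrt (2 * p / (p + 1)))

/-- The quartic polynomial `H` from Theorem 1.1. -/
noncomputable def Hpoly (p x : ℝ) : ℝ :=
  x ^ 4 - 32 * p * (p + 1) / (p - 1) ^ 2 * x ^ 2
    + 32 * p * (p + 1) * (p + 3) / (p - 1) ^ 3 * x
    - 64 * p * (p + 1) ^ 2 / (p - 1) ^ 4

open Set

theorem existsUnique_gt_eq_of_strictMonoOn_Ici {α δ : Type*}
    [ConditionallyCompleteLinearOrder α] [TopologicalSpace α] [OrderTopology α] [DenselyOrdered α]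
    [LinearOrder δ] [TopologicalSpace δ] [OrderClosedTopology δ] {f : α → δ} {a b : α} {c : δ}
    (hab : a ≤ b)
    (hf : ContinuousOn f (Icc a b)) (hmono : StrictMonoOn f (Ici a)) (ha : f a < c)
    (hb : c < f b) : ∃! x, a < x ∧ f x = c := by
  obtain ⟨x, hx, hfx⟩ := intermediate_value_Ioo hab hf ⟨ha, hb⟩
  refine ⟨x, ⟨hx.1, hfx⟩, fun y ⟨hy, hfy⟩ => ?_⟩
  exact hmono.injOn (mem_Ici.mpr hy.le) (mem_Ici.mpr hx.1.le) (hfy.trans hfx.symm)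

/-- `L` in the variable `q = 2p/(p+1)`. -/
def Lquartic (q s : ℝ) : ℝ :=
  s ^ 4 - 16 * q * s ^ 2 + 16 * q * (3 - q) * s - 16 * q * (2 - q)

theorem Lpoly_eq_Lquartic {p : ℝ} (hp : p + 1 ≠ 0) (s : ℝ) :
    Lpoly p s = Lquartic (2 * p / (p + 1)) s := by
  simp only [Lpoly, Lquartic]
  field_simp
  ring

theorem continuous_Lquartic (q : ℝ) : Continuous (Lquartic q) := by
  unfold Lquartic
  fun_prop

theorem hasDerivAt_Lquartic (q s : ℝ) :
    HasDerivAt (Lquartic q) (4 * s ^ 3 - 32 * q * s + 16 * q * (3 - q)) s := by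
  have h := (((hasDerivAt_pow 4 s).sub ((hasDerivAt_pow 2 s).const_mul (16 * q))).add
    ((hasDerivAt_id s).const_mul (16 * q * (3 - q)))).sub (hasDerivAt_const s (16 * q * (2 - q)))
  exact h.congr_deriv (by push_cast; ring)

theorem Lquartic_six_pos {q : ℝ} (hq₀ : 0 ≤ q) (hq₂ : q < 2) : 0 < Lquartic q 6 := by
  unfold Lquartic
  nlinarith

section

variable {u w : ℝ} (hu : 1 < u) (hw : 0 ≤ w) (hw2 : w ^ 2 = u ^ 2 - u)
include hu hw hw2

theorem Lquartic_two_mul_add_neg : Lquartic (u ^ 2) (2 * (u + w)) < 0 := by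
  have key : Lquartic (u ^ 2) (2 * (u + w)) = -16 * u ^ 2 * (u ^ 2 - 1) * (2 * u - 1 + 2 * w) := by
    unfold Lquartic
    linear_combination (16 * w ^ 2 + 64 * u * w + 48 * u ^ 2 - 16 * u) * hw2
  have h1 : 0 < u ^ 2 - 1 := by nlinarith
  have h2 : 0 < 2 * u - 1 + 2 * w := by linarith
  rw [key]
  linarith [mul_pos (mul_pos (by positivity : (0 : ℝ) < 16 * u ^ 2) h1) h2]

theorem deriv_Lquartic_pos (hu3 : u < 3) {s : ℝ} (hs : 2 * (u + w) ≤ s) :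
    0 < deriv (Lquartic (u ^ 2)) s := by
  rw [(hasDerivAt_Lquartic _ s).deriv]
  set r := s - 2 * (u + w) with hr
  have hr0 : 0 ≤ r := by linarith
  have key : 4 * s ^ 3 - 32 * u ^ 2 * s + 16 * u ^ 2 * (3 - u ^ 2)
      = 4 * r ^ 3 + 24 * (u + w) * r ^ 2 + (64 * u ^ 2 - 48 * u + 96 * u * w) * r
        + 16 * u * (u * (u - 1) * (3 - u) + 2 * (2 * u - 1) * w) := by
    rw [hr]
    linear_combination (48 * s - 64 * w) * hw2
  have hc₁ : 0 < 64 * u ^ 2 - 48 * u + 96 * u * w := by nlinarith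
  have hc₀ : 0 < u * (u - 1) * (3 - u) + 2 * (2 * u - 1) * w := by
    have : 0 < u * (u - 1) * (3 - u) := mul_pos (mul_pos (by linarith) (by linarith)) (by linarith)
    have : 0 ≤ 2 * (2 * u - 1) * w := mul_nonneg (by linarith) hw
    linarith
  rw [key]
  have := mul_nonneg hc₁.le hr0
  positivity

theorem strictMonoOn_Lquartic (hu3 : u < 3) :
    StrictMonoOn (Lquartic (u ^ 2)) (Ici (2 * (u + w))) := by
  refine strictMonoOn_of_deriv_pos (convex_Ici _) (continuous_Lquartic _).continuousOn ?_
  intro s hs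
  rw [interior_Ici] at hs
  exact deriv_Lquartic_pos hu hw hw2 hu3 hs.le

end

/-- `L` has exactly one root in the open interval `(2t₀, ∞)`. -/
theorem Lpoly_unique_root (p : ℝ) (hp : 1 < p) :
    ∃! s₀ : ℝ, 2 * t0 p < s₀ ∧ Lpoly p s₀ = 0 := by
  have hp1 : 0 < p + 1 := by linarith
  set q := 2 * p / (p + 1) with hq
  have hq₁ : 1 < q := by rw [hq, lt_div_iff₀ hp1]; linarith
  have hq₂ : q < 2 := by rw [hq, div_lt_iff₀ hp1]; linarith
  set u := √q
  have hu2 : u ^ 2 = q := Real.sq_sqrt (by linarith)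
  have hu : 1 < u := by nlinarith [Real.sqrt_nonneg q]
  set w := √(q - u)
  have hw2 : w ^ 2 = u ^ 2 - u := by rw [Real.sq_sqrt (by nlinarith), hu2]
  have hw : 0 ≤ w := Real.sqrt_nonneg _
  have hu3 : u < 3 := by nlinarith
  have hb : 2 * (u + w) ≤ 6 := by nlinarith
  have hL : Lpoly p = Lquartic (u ^ 2) := by
    funext s
    rw [Lpoly_eq_Lquartic hp1.ne', hu2]
  have ht0 : t0 p = u + w := rfl
  rw [ht0, hL]
  exact existsUnique_gt_eq_of_strictMonoOn_Ici hb (continuous_Lquartic _).continuousOn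
    (strictMonoOn_Lquartic hu hw hw2 hu3) (Lquartic_two_mul_add_neg hu hw hw2)
    (Lquartic_six_pos (by positivity) (by linarith))
end

section
/- Let N ≥ 1, p > 1, and let u ∈ C⁴(ℝ^N) satisfy u > 0 and Δ(Δu) = u^p in ℝ^N. Set β = √(2/(p+1)), v = −Δu, and ζ = β·u^{(p+1)/2} − v. Then ζ is C² and satisfies the pointwise differential inequality Δζ ≥ β^{−1} · u^{(p−1)/2} · ζ everywhere in ℝ^N. -/
open MeasureTheory Real

/-- The Laplacian of a function on `ℝ^N` (sum of pure second derivatives). -/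
noncomputable def lap {N : ℕ} (u : EuclideanSpace ℝ (Fin N) → ℝ)
    (x : EuclideanSpace ℝ (Fin N)) : ℝ :=
  ∑ i : Fin N, fderiv ℝ (fun y => fderiv ℝ u y (EuclideanSpace.single i 1)) x
    (EuclideanSpace.single i 1)

/-! With `q = (p + 1) / 2`, the chain rule gives
`Δ(u^q) = q u^(q-1) Δu + q (q-1) u^(q-2) |∇u|²`, whose gradient term is nonnegative because `q > 1`.
Hence `Δζ = β Δ(u^q) + Δ²u ≥ β q u^(q-1) Δu + u^p`, and since `β q = β⁻¹` and
`u^p = u^(q-1) u^q`, the right-hand side is `β⁻¹ u^(q-1) (β u^q + Δu) = β⁻¹ u^(q-1) ζ`. -/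

section Laplacian

variable {N : ℕ} {f g : EuclideanSpace ℝ (Fin N) → ℝ}

theorem ContDiff.fderiv_apply_const {m n : WithTop ℕ∞} (hf : ContDiff ℝ n f) (h : m + 1 ≤ n)
    (v : EuclideanSpace ℝ (Fin N)) : ContDiff ℝ m fun y => fderiv ℝ f y v :=
  (hf.fderiv_right h).clm_apply contDiff_const

theorem ContDiff.differentiable_fderiv_apply_const (hf : ContDiff ℝ 2 f)
    (v : EuclideanSpace ℝ (Fin N)) : Differentiable ℝ fun y => fderiv ℝ f y v :=
  (hf.fderiv_apply_const (m := 1) (by norm_num) v).differentiable one_ne_zero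

theorem ContDiff.lap {m n : WithTop ℕ∞} (hf : ContDiff ℝ n f) (h : m + 2 ≤ n) :
    ContDiff ℝ m (lap f) := by
  have h' : m + 1 + 1 ≤ n := by rwa [add_assoc, one_add_one_eq_two]
  exact ContDiff.sum fun i _ => ((hf.fderiv_apply_const h' _).fderiv_apply_const le_rfl _)

theorem lap_const_mul (c : ℝ) (x : EuclideanSpace ℝ (Fin N)) :
    lap (fun y => c * f y) x = c * lap f x := by
  have hc (h : EuclideanSpace ℝ (Fin N) → ℝ) : fderiv ℝ (fun y => c * h y) = c • fderiv ℝ h :=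
    fderiv_const_smul_field c
  simp only [lap, hc, Pi.smul_apply, smul_apply, smul_eq_mul, Finset.mul_sum]

theorem lap_add (hf : ContDiff ℝ 2 f) (hg : ContDiff ℝ 2 g) (x : EuclideanSpace ℝ (Fin N)) :
    lap (fun y => f y + g y) x = lap f x + lap g x := by
  have hfg : fderiv ℝ (fun y => f y + g y) = fun y => fderiv ℝ f y + fderiv ℝ g y := funext
    fun y => fderiv_fun_add ((hf.differentiable two_ne_zero) y) ((hg.differentiable two_ne_zero) y)
  simp only [lap, hfg, add_apply, ← Finset.sum_add_distrib]
  refine Finset.sum_congr rfl fun i _ => ?_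
  rw [fderiv_fun_add (hf.differentiable_fderiv_apply_const _ x)
    (hg.differentiable_fderiv_apply_const _ x)]
  rfl

theorem fderiv_rpow_const_apply (hf : Differentiable ℝ f) (hf0 : ∀ y, f y ≠ 0) (q : ℝ)
    (y v : EuclideanSpace ℝ (Fin N)) :
    fderiv ℝ (fun z => f z ^ q) y v = q * f y ^ (q - 1) * fderiv ℝ f y v := by
  rw [((hf y).hasFDerivAt.rpow_const (Or.inl (hf0 y))).fderiv]
  simp [mul_assoc]

theorem lap_rpow_const (hf : ContDiff ℝ 2 f) (hf0 : ∀ y, f y ≠ 0) (q : ℝ)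
    (x : EuclideanSpace ℝ (Fin N)) :
    lap (fun y => f y ^ q) x = q * f x ^ (q - 1) * lap f x
      + q * (q - 1) * f x ^ (q - 2) * ∑ i, fderiv ℝ f x (EuclideanSpace.single i 1) ^ 2 := by
  have hfd : Differentiable ℝ f := hf.differentiable two_ne_zero
  simp only [lap, fderiv_rpow_const_apply hfd hf0, Finset.mul_sum, ← Finset.sum_add_distrib]
  refine Finset.sum_congr rfl fun i _ => ?_
  have hpow : HasFDerivAt (fun y => q * f y ^ (q - 1))
      (q • (((q - 1) * f x ^ (q - 1 - 1)) • fderiv ℝ f x)) x :=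
    ((hfd x).hasFDerivAt.rpow_const (Or.inl (hf0 x))).const_mul q
  have hdir := (hf.differentiable_fderiv_apply_const (EuclideanSpace.single i 1) x).hasFDerivAt
  rw [(hpow.fun_mul hdir).fderiv, show q - 1 - 1 = q - 2 by ring]
  simp only [add_apply, smul_apply, smul_eq_mul]
  ring

end Laplacian

theorem zeta_differential_inequality_general
    (N : ℕ) (p : ℝ) (hp : 1 < p)
    (u : EuclideanSpace ℝ (Fin N) → ℝ)
    (hu : ContDiff ℝ 4 u) (hpos : ∀ x, 0 < u x)
    (heq : ∀ x, lap (lap u) x = u x ^ p) :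
    ContDiff ℝ 2 (fun x => Real.sqrt (2 / (p + 1)) * u x ^ ((p + 1) / 2) - (-(lap u x)))
      ∧ ∀ x, (Real.sqrt (2 / (p + 1)))⁻¹ * u x ^ ((p - 1) / 2) *
          (Real.sqrt (2 / (p + 1)) * u x ^ ((p + 1) / 2) - (-(lap u x)))
        ≤ lap (fun y => Real.sqrt (2 / (p + 1)) * u y ^ ((p + 1) / 2) - (-(lap u y))) x := by
  set β := √(2 / (p + 1))
  set q := (p + 1) / 2 with hq
  have hu0 : ∀ y, u y ≠ 0 := fun y => (hpos y).ne'
  have hu2 : ContDiff ℝ 2 u := hu.of_le (by norm_num)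
  have huq : ContDiff ℝ 2 fun y => u y ^ q := hu2.rpow_const_of_ne hu0
  have hΔu : ContDiff ℝ 2 (lap u) := hu.lap (by norm_num)
  refine ⟨(contDiff_const.mul huq).sub hΔu.neg, fun x => ?_⟩
  have hβ : β ≠ 0 := (Real.sqrt_pos.2 (by positivity)).ne'
  have hβq : β * q = β⁻¹ := eq_inv_of_mul_eq_one_right <| by
    rw [← mul_assoc, Real.mul_self_sqrt (by positivity), hq]; field_simp
  have hexp : (p - 1) / 2 = q - 1 := by rw [hq]; ring
  have hpow : u x ^ (q - 1) * u x ^ q = u x ^ p := by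
    rw [← Real.rpow_add (hpos x), hq]; ring_nf
  have hgrad :
      0 ≤ q * (q - 1) * u x ^ (q - 2) * ∑ i, fderiv ℝ u x (EuclideanSpace.single i 1) ^ 2 :=
    mul_nonneg (mul_nonneg (mul_nonneg (by positivity) (by linarith)) (rpow_nonneg (hpos x).le _))
      (Finset.sum_nonneg fun i _ => sq_nonneg _)
  have hζ : (fun y => β * u y ^ q - -lap u y) = fun y => β * u y ^ q + lap u y := by
    funext y; ring
  calc β⁻¹ * u x ^ ((p - 1) / 2) * (β * u x ^ q - -lap u x)
      = β * (q * u x ^ (q - 1) * lap u x) + u x ^ p := by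
        rw [hexp, ← hpow]
        linear_combination
          (u x ^ (q - 1) * u x ^ q) * inv_mul_cancel₀ hβ - (u x ^ (q - 1) * lap u x) * hβq
    _ ≤ β * lap (fun y => u y ^ q) x + lap (lap u) x := by
        rw [lap_rpow_const hu2 hu0, heq]
        gcongr
        exact le_add_of_nonneg_right hgrad
    _ = _ := by rw [hζ, lap_add (contDiff_const.mul huq) hΔu, lap_const_mul]

/-- For a `C⁴` positive solution of `Δ²u = u^p`, the function
`ζ = √(2/(p+1)) u^{(p+1)/2} − v`, `v = -Δu`, is `C²` and satisfies
`Δζ ≥ √((p+1)/2) u^{(p−1)/2} ζ` pointwise. -/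
theorem zeta_differential_inequality
    (N : ℕ) (hN : 1 ≤ N) (p : ℝ) (hp : 1 < p)
    (u : EuclideanSpace ℝ (Fin N) → ℝ)
    (hu : ContDiff ℝ 4 u) (hpos : ∀ x, 0 < u x)
    (heq : ∀ x, lap (lap u) x = u x ^ p) :
    ContDiff ℝ 2 (fun x => Real.sqrt (2 / (p + 1)) * u x ^ ((p + 1) / 2) - (-(lap u x)))
      ∧ ∀ x, (Real.sqrt (2 / (p + 1)))⁻¹ * u x ^ ((p - 1) / 2) *
          (Real.sqrt (2 / (p + 1)) * u x ^ ((p + 1) / 2) - (-(lap u x)))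
        ≤ lap (fun y => Real.sqrt (2 / (p + 1)) * u y ^ ((p + 1) / 2) - (-(lap u y))) x :=
  zeta_differential_inequality_general N p hp u hu hpos heq
end
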